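/- arXiv:2202.04999 — 2 statements merged into one kernel-verified Lean document; each statement's English description precedes it below -/
import Mathlib

section
/- Let A and B be bounded self-adjoint operators on a complex Hilbert space H. Then A and B commute (AB = BA) if and only if their exponentials commute (e^A e^B = e^B e^A). -/
variable {H : Type*} [NormedAddCommGroup H] [InnerProductSpace ℂ H] [CompleteSpace H]

/-- The exponential of a bounded operator, `e^T = ∑ Tⁿ/n!`. -/
noncomputable def opExp (T : H →L[ℂ] H) : H →L[ℂ] H := NormedSpace.exp T

/-- The logarithm of a (positive invertible) bounded operator, via the
continuous functional calculus. -/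
noncomputable def opLog (A : H →L[ℂ] H) : H →L[ℂ] H := cfc Real.log A

/-- The generalized power `A^B = e^{B log A}`. -/
noncomputable def gpow (A B : H →L[ℂ] H) : H →L[ℂ] H := opExp (B * opLog A)

-- `a = log (exp a)` is a continuous function of `exp a`, and such functions inherit commutation.
theorem IsSelfAdjoint.commute_of_commute_exp {R : Type*} [NormedRing R] [StarRing R]
    [NormedAlgebra ℝ R] [ContinuousFunctionalCalculus ℝ R IsSelfAdjoint] {a b : R}
    (ha : IsSelfAdjoint a) (h : Commute (NormedSpace.exp a) b) : Commute a b :=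
  CFC.log_exp a ha ▸ h.cfc_real Real.log

theorem stmt0 (A B : H →L[ℂ] H) (hA : IsSelfAdjoint A) (hB : IsSelfAdjoint B) :
    A * B = B * A ↔ opExp A * opExp B = opExp B * opExp A := by
  refine ⟨Commute.exp, fun h ↦ ?_⟩
  have hAexpB : Commute A (opExp B) := hA.commute_of_commute_exp h
  exact (hB.commute_of_commute_exp hAexpB.symm).symm
end

section
/- Let A ∈ B(H) be positive and invertible and let B ∈ B(H) be normal with AB = BA. Then the generalized power A^B = e^{B log A} is normal. -/
variable {H : Type*} [NormedAddCommGroup H] [InnerProductSpace ℂ H] [CompleteSpace H]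

/-! `log A` is self-adjoint and, by the continuous functional calculus, commutes with `B`;
being self-adjoint, it then also commutes with `B*`. A product `ab` of normal elements is normal
as soon as `a` commutes with `b*`, so `B log A` is normal, and the exponential of a normal element
is normal because `(e^X)* = e^{X*}` commutes with `e^X`. -/

theorem Commute.isStarNormal_mul {R : Type*} [Monoid R] [StarMul R] {a b : R}
    (hab : Commute a (star b)) [IsStarNormal a] [IsStarNormal b] :
    IsStarNormal (a * b) := by
  have hba : Commute b (star a) := by simpa using hab.star_star.symm
  refine ⟨?_⟩
  rw [star_mul]
  exact (hab.symm.mul_right (star_comm_self (x := b))).mul_left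
    ((star_comm_self (x := a)).mul_right hba.symm)

theorem IsStarNormal.exp {𝔸 : Type*} [Ring 𝔸] [StarRing 𝔸] [TopologicalSpace 𝔸]
    [IsTopologicalRing 𝔸] [T2Space 𝔸] [ContinuousStar 𝔸] (x : 𝔸) [IsStarNormal x] :
    IsStarNormal (NormedSpace.exp x) :=
  ⟨NormedSpace.star_exp x ▸ (star_comm_self (x := x)).exp⟩

theorem stmt16_general (A B : H →L[ℂ] H)
    (hB : B * star B = star B * B) (hcomm : A * B = B * A) :
    gpow A B * star (gpow A B) = star (gpow A B) * gpow A B := by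
  have hL : IsSelfAdjoint (opLog A) := cfc_predicate Real.log A
  have hBL : Commute B (opLog A) := (Commute.cfc_real hcomm Real.log).symm
  have : IsStarNormal B := ⟨hB.symm⟩
  have : IsStarNormal (opLog A) := hL.isStarNormal
  have : IsStarNormal (B * opLog A) := (hL.star_eq.symm ▸ hBL).isStarNormal_mul
  have : IsStarNormal (gpow A B) := IsStarNormal.exp (B * opLog A)
  exact (star_comm_self' (gpow A B)).symm

theorem stmt16 (A B : H →L[ℂ] H) (hA : 0 ≤ A) (hAu : IsUnit A)
    (hB : B * star B = star B * B) (hcomm : A * B = B * A) :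
    gpow A B * star (gpow A B) = star (gpow A B) * gpow A B :=
  stmt16_general A B hB hcomm
end
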